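/- arXiv:2305.02059 — 2 statements merged into one kernel-verified Lean document; each statement's English description precedes it below -/
import Mathlib

section
/- Let G be a path on n vertices and let the instance of qubit routing have disjoint pairs (i.e., the token pairs varphi(s) for s in S are pairwise disjoint). For any token placement f, there exists a feasible swap sequence starting at f of length exactly value(f) = gap(f) - cross(f), where gap(f) = \sum_{s in S} (distance between positions of the two tokens of varphi(s) minus 1) and cross(f) is the number of pairs {s,s'} whose position intervals cross (interleave). -/
/-- A single swap on the path with vertices `{0, …, n-1}` (edges `{i, i+1}`). -/
def AdjSwap {n : ℕ} {T : Type*} [DecidableEq T] (f g : Fin n ≃ T) : Prop :=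
  ∃ i j : Fin n, (i : ℕ) + 1 = (j : ℕ) ∧ g = (Equiv.swap i j).trans f

/-- `F 0 ~> F 1 ~> ⋯ ~> F l` is a swap sequence on the path. -/
def SwapSeq {n : ℕ} {T : Type*} [DecidableEq T] (l : ℕ) (F : ℕ → (Fin n ≃ T)) : Prop :=
  ∀ j, j < l → AdjSwap (F j) (F (j + 1))

/-- The gate pairs `{φ₁ s, φ₂ s}` (s ∈ S) are pairwise disjoint (and each is a genuine pair). -/
def DisjPairs {T S : Type*} (φ₁ φ₂ : S → T) : Prop :=
  (∀ s, φ₁ s ≠ φ₂ s) ∧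
  ∀ s s', s ≠ s' →
    φ₁ s ≠ φ₁ s' ∧ φ₁ s ≠ φ₂ s' ∧ φ₂ s ≠ φ₁ s' ∧ φ₂ s ≠ φ₂ s'

/-- The smaller of the two positions of the pair `φ s` under the placement `f`. -/
def pmin {n : ℕ} {T S : Type*} (φ₁ φ₂ : S → T) (f : Fin n ≃ T) (s : S) : ℕ :=
  min (f.symm (φ₁ s) : ℕ) (f.symm (φ₂ s) : ℕ)

/-- The larger of the two positions of the pair `φ s` under the placement `f`. -/
def pmax {n : ℕ} {T S : Type*} (φ₁ φ₂ : S → T) (f : Fin n ≃ T) (s : S) : ℕ :=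
  max (f.symm (φ₁ s) : ℕ) (f.symm (φ₂ s) : ℕ)

/-- `gap f = ∑ₛ (distance between the positions of the two tokens of φ s, minus 1)`. -/
def gapZ {n : ℕ} {T S : Type*} [Fintype S] (φ₁ φ₂ : S → T) (f : Fin n ≃ T) : ℤ :=
  ∑ s : S, ((pmax φ₁ φ₂ f s : ℤ) - (pmin φ₁ φ₂ f s : ℤ) - 1)

/-- `cross f` = number of (unordered) pairs `{s, s'}` whose position intervals interleave;
each such pair is counted exactly once, oriented so that `s` has the smaller left endpoint. -/
def crossZ {n : ℕ} {T S : Type*} [Fintype S] (φ₁ φ₂ : S → T) (f : Fin n ≃ T) : ℤ :=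
  (((Finset.univ ×ˢ Finset.univ : Finset (S × S)).filter fun p =>
      pmin φ₁ φ₂ f p.1 < pmin φ₁ φ₂ f p.2 ∧
      pmin φ₁ φ₂ f p.2 < pmax φ₁ φ₂ f p.1 ∧
      pmax φ₁ φ₂ f p.1 < pmax φ₁ φ₂ f p.2).card : ℤ)

/-- `value f = gap f - cross f`. -/
def valueZ {n : ℕ} {T S : Type*} [Fintype S] (φ₁ φ₂ : S → T) (f : Fin n ≃ T) : ℤ :=
  gapZ φ₁ φ₂ f - crossZ φ₁ φ₂ f

/-- A swap sequence is feasible if for every `s ∈ S` some placement in the sequence puts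
the two tokens of `φ s` on adjacent vertices of the path (order constraints are vacuous
for disjoint pairs). -/
def Feasible {n : ℕ} {T S : Type*} [DecidableEq T] (φ₁ φ₂ : S → T) (l : ℕ)
    (F : ℕ → (Fin n ≃ T)) : Prop :=
  ∀ s : S, ∃ j ≤ l, Nat.dist ((F j).symm (φ₁ s) : ℕ) ((F j).symm (φ₂ s) : ℕ) = 1

/-!
Regard each pair as the interval between the positions of its two tokens. Let `s` be the
non-adjacent pair with the leftmost left end `a`, with right end `c + 1`, and swap the tokens at
`c` and `c + 1`. Only `s` and the pair `u` holding position `c`, if there is one, move; without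
`u` the gap of `s` drops by one and no crossing changes. By the choice of `s`, the other end `q`
of `u` lies right of `a`. If `q < c`, then `u` goes from nested in `s` to crossing it: the gap is
unchanged and there is one more crossing. If `q > c + 1`, then `u` goes from crossing `s` to
disjoint from it: the gap drops by two and there is one fewer crossing. Either way the value drops
by exactly one. Since the value is never negative, at value zero every pair is adjacent, and
induction on the value gives the sequence.
-/

open Function Finset

lemma swap_apply_cases {α : Type*} [DecidableEq α] (a b k : α) :
    (k = a → Equiv.swap a b k = b) ∧ (k = b → Equiv.swap a b k = a) ∧
      (k ≠ a → k ≠ b → Equiv.swap a b k = k) :=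
  ⟨by rintro rfl; exact Equiv.swap_apply_left k b, by rintro rfl; exact Equiv.swap_apply_right a k,
    Equiv.swap_apply_of_ne_of_ne⟩

/- Pair `u` sits at the positions `x u` and `y u`; `Injective (Sum.elim x y)` says that all these
positions are distinct. -/
namespace PairIntervals

variable {S : Type*} {x y : S → ℕ}

variable (x y) in
def left (u : S) : ℕ := min (x u) (y u)

variable (x y) in
def right (u : S) : ℕ := max (x u) (y u)

variable (x y) in
def Crosses (u v : S) : Prop :=
  left x y u < left x y v ∧ left x y v < right x y u ∧ right x y u < right x y v

instance : DecidableRel (Crosses x y) := fun _ _ => inferInstanceAs (Decidable (_ ∧ _ ∧ _))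

lemma not_crosses_self (u : S) : ¬ Crosses x y u u := fun h => lt_irrefl _ h.1

variable (x y) in
def gapAt (u : S) : ℤ := (right x y u : ℤ) - left x y u - 1

lemma ne_of_injective_sumElim (h : Injective (Sum.elim x y)) (u : S) : x u ≠ y u :=
  fun e => Sum.inl_ne_inr (h e)

lemma eq_or_disjoint_of_injective_sumElim (h : Injective (Sum.elim x y)) (u v : S) :
    u = v ∨ (x u ≠ x v ∧ x u ≠ y v ∧ y u ≠ x v ∧ y u ≠ y v) := by
  by_cases huv : u = v
  · exact Or.inl huv
  · refine Or.inr ⟨fun e => huv ?_, fun e => ?_, fun e => ?_, fun e => huv ?_⟩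
    · exact Sum.inl_injective (h e)
    · exact Sum.inl_ne_inr (h e)
    · exact Sum.inr_ne_inl (h e)
    · exact Sum.inr_injective (h e)

lemma left_lt_right (h : Injective (Sum.elim x y)) (u : S) : left x y u < right x y u := by
  have := ne_of_injective_sumElim h u
  simp only [left, right]
  omega

lemma left_injective (h : Injective (Sum.elim x y)) : Injective (left x y) := by
  intro u v huv
  refine (eq_or_disjoint_of_injective_sumElim h u v).resolve_right fun hd => ?_
  simp only [left] at huv
  omega

lemma gapAt_nonneg (h : Injective (Sum.elim x y)) (u : S) : 0 ≤ gapAt x y u := by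
  have := left_lt_right h u
  unfold gapAt
  omega

lemma left_right_swap_self (h : Injective (Sum.elim x y)) {s : S} {c : ℕ}
    (hc : right x y s = c + 1) (hs : 0 < gapAt x y s) :
    left (Equiv.swap c (c + 1) ∘ x) (Equiv.swap c (c + 1) ∘ y) s = left x y s ∧
      right (Equiv.swap c (c + 1) ∘ x) (Equiv.swap c (c + 1) ∘ y) s = c := by
  have hne := ne_of_injective_sumElim h s
  have hx := swap_apply_cases c (c + 1) (x s)
  have hy := swap_apply_cases c (c + 1) (y s)
  simp only [gapAt, left, right, comp_apply] at hc hs ⊢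
  omega

/-- The three alternatives: a pair away from `c` and `c + 1`, the pair at `c` nested in `s`, and
the pair at `c` crossing `s`. -/
lemma left_right_swap_of_ne (h : Injective (Sum.elim x y)) {s : S} {c : ℕ}
    (hc : right x y s = c + 1) (hs : 0 < gapAt x y s)
    (hmin : ∀ u, 0 < gapAt x y u → left x y s ≤ left x y u) {w : S} (hw : w ≠ s) :
    (left (Equiv.swap c (c + 1) ∘ x) (Equiv.swap c (c + 1) ∘ y) w = left x y w ∧
        right (Equiv.swap c (c + 1) ∘ x) (Equiv.swap c (c + 1) ∘ y) w = right x y w ∧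
        left x y w ≠ c ∧ left x y w ≠ c + 1 ∧ right x y w ≠ c ∧ right x y w ≠ c + 1) ∨
      (left x y s < left x y w ∧ left x y w < c ∧ right x y w = c ∧
        left (Equiv.swap c (c + 1) ∘ x) (Equiv.swap c (c + 1) ∘ y) w = left x y w ∧
        right (Equiv.swap c (c + 1) ∘ x) (Equiv.swap c (c + 1) ∘ y) w = c + 1) ∨
      (left x y w = c ∧ c + 1 < right x y w ∧
        left (Equiv.swap c (c + 1) ∘ x) (Equiv.swap c (c + 1) ∘ y) w = c + 1 ∧
        right (Equiv.swap c (c + 1) ∘ x) (Equiv.swap c (c + 1) ∘ y) w = right x y w) := by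
  have hne := ne_of_injective_sumElim h w
  have hdisj := (eq_or_disjoint_of_injective_sumElim h w s).resolve_left hw
  have hmw := hmin w
  simp only [gapAt, left, right, comp_apply] at hc hs hmw ⊢
  have hx1 : x w ≠ c + 1 := by omega
  have hy1 : y w ≠ c + 1 := by omega
  have hσ := swap_apply_cases c (c + 1)
  by_cases hx : x w = c <;> by_cases hy : y w = c
  · exact absurd (hx.trans hy.symm) hne
  · rw [(hσ _).1 hx, (hσ _).2.2 hy hy1]
    omega
  · rw [(hσ _).2.2 hx hx1, (hσ _).1 hy]
    omega
  · rw [(hσ _).2.2 hx hx1, (hσ _).2.2 hy hy1]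
    omega

lemma crosses_swap_iff (h : Injective (Sum.elim x y)) {s : S} {c : ℕ}
    (hc : right x y s = c + 1) (hs : 0 < gapAt x y s)
    (hmin : ∀ u, 0 < gapAt x y u → left x y s ≤ left x y u) {u : S} (hu : u ≠ s)
    (v : S) :
    Crosses (Equiv.swap c (c + 1) ∘ x) (Equiv.swap c (c + 1) ∘ y) u v ↔ Crosses x y u v := by
  have hsu := left_right_swap_of_ne h hc hs hmin hu
  unfold Crosses
  by_cases hv : v = s
  · subst hv
    have := left_right_swap_self h hc hs
    omega
  · have hsv := left_right_swap_of_ne h hc hs hmin hv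
    omega

lemma gapAt_swap_sub (h : Injective (Sum.elim x y)) {s : S} {c : ℕ}
    (hc : right x y s = c + 1) (hs : 0 < gapAt x y s)
    (hmin : ∀ u, 0 < gapAt x y u → left x y s ≤ left x y u) {w : S} (hw : w ≠ s) :
    gapAt (Equiv.swap c (c + 1) ∘ x) (Equiv.swap c (c + 1) ∘ y) w - gapAt x y w =
      (if Crosses (Equiv.swap c (c + 1) ∘ x) (Equiv.swap c (c + 1) ∘ y) s w then 1 else 0) -
        (if Crosses x y s w then 1 else 0) := by
  have hsw := left_right_swap_of_ne h hc hs hmin hw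
  have := left_right_swap_self h hc hs
  unfold gapAt at hs ⊢
  split_ifs with h₁ h₂ h₂ <;> unfold Crosses at h₁ h₂ <;> omega

variable [Fintype S]

variable (x y) in
def gap : ℤ := ∑ u, gapAt x y u

variable (x y) in
def cross : ℤ := ((univ ×ˢ univ : Finset (S × S)).filter fun p => Crosses x y p.1 p.2).card

variable (x y) in
def value : ℤ := gap x y - cross x y

variable (x y) in
lemma cross_eq_sum : cross x y = ∑ u, ∑ v, if Crosses x y u v then (1 : ℤ) else 0 := by
  rw [cross, card_filter, univ_product_univ, ← Fintype.sum_prod_type']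
  push_cast
  rfl

lemma cross_nonneg : 0 ≤ cross x y := Int.natCast_nonneg _

lemma gap_nonneg (h : Injective (Sum.elim x y)) : 0 ≤ gap x y :=
  sum_nonneg fun u _ => gapAt_nonneg h u

lemma dist_eq_one_of_gap_eq_zero (h : Injective (Sum.elim x y)) (hg : gap x y = 0) (u : S) :
    Nat.dist (x u) (y u) = 1 := by
  have hu := (sum_eq_zero_iff_of_nonneg fun w _ => gapAt_nonneg h w).mp hg u (mem_univ u)
  have := ne_of_injective_sumElim h u
  simp only [gapAt, left, right] at hu
  unfold Nat.dist
  omega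

/-- Each crossing `(u, v)` is charged to the position `left v`, which lies strictly inside the
interval of `u`; distinct crossings get distinct charges. -/
lemma cross_le_gap (h : Injective (Sum.elim x y)) : cross x y ≤ gap x y := by
  have hcard : ((univ ×ˢ univ : Finset (S × S)).filter fun p => Crosses x y p.1 p.2).card ≤
      (univ.sigma fun u : S => Ioo (left x y u) (right x y u)).card := by
    refine card_le_card_of_injOn (fun p => ⟨p.1, left x y p.2⟩) (fun p hp => ?_) ?_
    · obtain ⟨h₁, h₂, -⟩ := (mem_filter.mp hp).2
      exact mem_sigma.mpr ⟨mem_univ _, mem_Ioo.mpr ⟨h₁, h₂⟩⟩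
    · intro p _ q _ hpq
      simp only [Sigma.mk.injEq] at hpq
      exact Prod.ext hpq.1 (left_injective h (eq_of_heq hpq.2))
  have hsigma : ((univ.sigma fun u : S => Ioo (left x y u) (right x y u)).card : ℤ) = gap x y := by
    rw [card_sigma, Nat.cast_sum, gap]
    refine sum_congr rfl fun u _ => ?_
    have := left_lt_right h u
    rw [Nat.card_Ioo, gapAt]
    omega
  rw [cross, ← hsigma]
  exact_mod_cast hcard

lemma value_nonneg (h : Injective (Sum.elim x y)) : 0 ≤ value x y :=
  sub_nonneg.mpr (cross_le_gap h)

lemma exists_leftmost_of_gap_pos (hg : 0 < gap x y) :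
    ∃ s, 0 < gapAt x y s ∧ ∀ u, 0 < gapAt x y u → left x y s ≤ left x y u := by
  obtain ⟨s₀, hs₀⟩ : ∃ s₀, 0 < gapAt x y s₀ := by
    by_contra! hshort
    exact hg.not_ge (sum_nonpos fun u _ => hshort u)
  obtain ⟨s, hs, hmin⟩ := exists_min_image (univ.filter fun u => 0 < gapAt x y u)
    (left x y) ⟨s₀, mem_filter.mpr ⟨mem_univ _, hs₀⟩⟩
  exact ⟨s, (mem_filter.mp hs).2, fun u hu => hmin u (mem_filter.mpr ⟨mem_univ u, hu⟩)⟩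

variable (x y) in
lemma value_sub_value_eq_sum (x' y' : S → ℕ) (s : S)
    (hcross : ∀ u v, u ≠ s → (Crosses x' y' u v ↔ Crosses x y u v)) :
    value x' y' - value x y = ∑ w, ((gapAt x' y' w - gapAt x y w) -
      ((if Crosses x' y' s w then 1 else 0) - (if Crosses x y s w then 1 else 0))) := by
  have hcross_sub : cross x' y' - cross x y = ∑ w,
      ((if Crosses x' y' s w then (1 : ℤ) else 0) - (if Crosses x y s w then 1 else 0)) := by
    rw [cross_eq_sum, cross_eq_sum, ← sum_sub_distrib, Fintype.sum_eq_single s, ← sum_sub_distrib]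
    intro u hu
    rw [← sum_sub_distrib]
    exact sum_eq_zero fun v _ => by simp only [hcross u v hu, sub_self]
  rw [value, value, sub_sub_sub_comm, hcross_sub, gap, gap, ← sum_sub_distrib, ← sum_sub_distrib]

theorem value_swap (h : Injective (Sum.elim x y)) {s : S} {c : ℕ}
    (hc : right x y s = c + 1) (hs : 0 < gapAt x y s)
    (hmin : ∀ u, 0 < gapAt x y u → left x y s ≤ left x y u) :
    value (Equiv.swap c (c + 1) ∘ x) (Equiv.swap c (c + 1) ∘ y) = value x y - 1 := by
  have hsub := value_sub_value_eq_sum x y _ _ s fun u v hu => crosses_swap_iff h hc hs hmin hu v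
  rw [Fintype.sum_eq_single s fun w hw => sub_eq_zero.mpr (gapAt_swap_sub h hc hs hmin hw),
    if_neg (not_crosses_self _), if_neg (not_crosses_self _)] at hsub
  have := left_right_swap_self h hc hs
  unfold gapAt at hsub
  omega

end PairIntervals

open PairIntervals

section Routing

variable {n : ℕ} {T S : Type*}

def positions (f : Fin n ≃ T) (φ : S → T) (u : S) : ℕ := f.symm (φ u)

lemma DisjPairs.injective_sumElim {φ₁ φ₂ : S → T} (hdisj : DisjPairs φ₁ φ₂) :
    Injective (Sum.elim φ₁ φ₂) := by
  obtain ⟨hpair, hdisjoint⟩ := hdisj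
  rintro (u | u) (v | v) huv <;> simp only [Sum.elim_inl, Sum.elim_inr, Sum.inl.injEq,
    Sum.inr.injEq, reduceCtorEq] at huv ⊢
  · by_contra h
    exact (hdisjoint u v h).1 huv
  · obtain rfl | h := eq_or_ne u v
    exacts [hpair u huv, (hdisjoint u v h).2.1 huv]
  · obtain rfl | h := eq_or_ne u v
    exacts [hpair u huv.symm, (hdisjoint u v h).2.2.1 huv]
  · by_contra h
    exact (hdisjoint u v h).2.2.2 huv

lemma injective_sumElim_positions {φ₁ φ₂ : S → T} (hdisj : DisjPairs φ₁ φ₂) (f : Fin n ≃ T) :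
    Injective (Sum.elim (positions f φ₁) (positions f φ₂)) := by
  have : Sum.elim (positions f φ₁) (positions f φ₂) = Fin.val ∘ f.symm ∘ Sum.elim φ₁ φ₂ := by
    ext (u | u) <;> rfl
  rw [this]
  exact Fin.val_injective.comp (f.symm.injective.comp hdisj.injective_sumElim)

lemma positions_swap_trans [DecidableEq T] (f : Fin n ≃ T) (i j : Fin n) (φ : S → T) :
    positions ((Equiv.swap i j).trans f) φ = Equiv.swap (i : ℕ) j ∘ positions f φ := by
  ext u
  simp only [positions, comp_apply, Equiv.symm_trans_apply, Equiv.symm_swap]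
  exact (Fin.val_injective.swap_apply i j _).symm

variable [Fintype S] {φ₁ φ₂ : S → T}

lemma valueZ_eq (f : Fin n ≃ T) : valueZ φ₁ φ₂ f = value (positions f φ₁) (positions f φ₂) := rfl

lemma gapZ_eq (f : Fin n ≃ T) : gapZ φ₁ φ₂ f = gap (positions f φ₁) (positions f φ₂) := rfl

lemma exists_adjSwap_valueZ_eq_sub_one [DecidableEq T] (hdisj : DisjPairs φ₁ φ₂) (f : Fin n ≃ T)
    (hg : 0 < gapZ φ₁ φ₂ f) : ∃ g, AdjSwap f g ∧ valueZ φ₁ φ₂ g = valueZ φ₁ φ₂ f - 1 := by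
  have hinj := injective_sumElim_positions hdisj f
  obtain ⟨s, hs, hmin⟩ := exists_leftmost_of_gap_pos (x := positions f φ₁) (y := positions f φ₂) hg
  obtain ⟨c, hc⟩ := Nat.exists_eq_add_one.mpr ((Nat.zero_le _).trans_lt (left_lt_right hinj s))
  have hlt : c + 1 < n := hc ▸ max_lt (f.symm (φ₁ s)).isLt (f.symm (φ₂ s)).isLt
  let i : Fin n := ⟨c, by omega⟩
  let j : Fin n := ⟨c + 1, hlt⟩
  refine ⟨(Equiv.swap i j).trans f, ⟨i, j, rfl, rfl⟩, ?_⟩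
  rw [valueZ_eq, valueZ_eq, positions_swap_trans, positions_swap_trans]
  exact value_swap hinj hc hs hmin

lemma SwapSeq.cons [DecidableEq T] {l : ℕ} {f : Fin n ≃ T} {F : ℕ → (Fin n ≃ T)}
    (hf : AdjSwap f (F 0)) (hF : SwapSeq l F) : SwapSeq (l + 1) (Stream'.cons f F) := by
  rintro (_ | j) hj
  · exact hf
  · exact hF j (by omega)

lemma exists_swapSeq_to_adjacent [DecidableEq T] (hdisj : DisjPairs φ₁ φ₂) (N : ℕ) :
    ∀ f : Fin n ≃ T, valueZ φ₁ φ₂ f = N → ∃ F : ℕ → (Fin n ≃ T), SwapSeq N F ∧ F 0 = f ∧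
      ∀ s, Nat.dist ((F N).symm (φ₁ s) : ℕ) ((F N).symm (φ₂ s) : ℕ) = 1 := by
  have hinj := injective_sumElim_positions (n := n) hdisj
  induction N with
  | zero =>
    intro f hf
    have hgap : gapZ φ₁ φ₂ f = 0 := by
      refine ((gap_nonneg (hinj f)).eq_or_lt.resolve_right fun hpos => ?_).symm
      obtain ⟨g, -, hg⟩ := exists_adjSwap_valueZ_eq_sub_one hdisj f hpos
      have := value_nonneg (hinj g)
      simp only [valueZ_eq] at hf hg
      omega
    exact ⟨fun _ => f, fun j hj => absurd hj (Nat.not_lt_zero j), rfl,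
      dist_eq_one_of_gap_eq_zero (hinj f) hgap⟩
  | succ N ih =>
    intro f hf
    have hpos : 0 < gapZ φ₁ φ₂ f := by
      have := cross_nonneg (x := positions f φ₁) (y := positions f φ₂)
      rw [valueZ_eq, value] at hf
      rw [gapZ_eq]
      omega
    obtain ⟨g, hfg, hg⟩ := exists_adjSwap_valueZ_eq_sub_one hdisj f hpos
    obtain ⟨F, hF, rfl, hadj⟩ := ih g (by rw [hg, hf]; push_cast; ring)
    exact ⟨Stream'.cons f F, hF.cons hfg, rfl, hadj⟩

end Routing

/-- on a path, for a qubit-routing instance with disjoint pairs, from any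
placement `f` there is a feasible swap sequence of length exactly `value f = gap f - cross f`. -/
theorem stmt3 {n : ℕ} {T S : Type*} [DecidableEq T] [Fintype S]
    (φ₁ φ₂ : S → T) (hdisj : DisjPairs φ₁ φ₂) (f : Fin n ≃ T) :
    ∃ (l : ℕ) (F : ℕ → (Fin n ≃ T)),
      SwapSeq l F ∧ F 0 = f ∧ Feasible φ₁ φ₂ l F ∧ (l : ℤ) = valueZ φ₁ φ₂ f := by
  have hvalue : (0 : ℤ) ≤ valueZ φ₁ φ₂ f := value_nonneg (injective_sumElim_positions hdisj f)
  obtain ⟨F, hF, hF0, hadj⟩ :=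
    exists_swapSeq_to_adjacent hdisj _ f (Int.toNat_of_nonneg hvalue).symm
  exact ⟨_, F, hF, hF0, fun s => ⟨_, le_rfl, hadj s⟩, Int.toNat_of_nonneg hvalue⟩
end

section
/- If in a qubit routing instance with a path graph and disjoint pairs we have gap(f) >= 1, then there exists a swap (on some edge {i,i+1}) transforming f into f' with value(f') = value(f) - 1 and gap(f') <= gap(f). -/
def sw (i x : ℕ) : ℕ := if x = i then i+1 else if x = i+1 then i else x

lemma sw_i (i : ℕ) : sw i i = i+1 := by simp [sw]

lemma sw_i1 (i : ℕ) : sw i (i+1) = i := by simp [sw]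

lemma sw_self (i x : ℕ) (h1 : x ≠ i) (h2 : x ≠ i+1) : sw i x = x := by
  simp [sw, h1, h2]

lemma sw_min (g : ℕ → ℕ) (x y : ℕ) :
    min (g x) (g y) = min (g (min x y)) (g (max x y)) := by
  rcases le_total x y with h|h
  · rw [min_eq_left h, max_eq_right h]
  · rw [min_eq_right h, max_eq_left h, min_comm]

lemma sw_max (g : ℕ → ℕ) (x y : ℕ) :
    max (g x) (g y) = max (g (min x y)) (g (max x y)) := by
  rcases le_total x y with h|h
  · rw [min_eq_left h, max_eq_right h]
  · rw [min_eq_right h, max_eq_left h, max_comm]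

lemma sum_delta2 {S : Type*} [Fintype S] [DecidableEq S] (h : S → ℤ) (s₀ s₁ : S)
    (c₀ c₁ : ℤ) (hh : ∀ s, h s = (if s = s₀ then c₀ else 0) + (if s = s₁ then c₁ else 0)) :
    ∑ s, h s = c₀ + c₁ := by
  rw [Finset.sum_congr rfl (fun s _ => hh s), Finset.sum_add_distrib]
  simp

lemma sum_delta1 {S : Type*} [Fintype S] [DecidableEq S] (h : S → ℤ) (s₀ : S)
    (c₀ : ℤ) (hh : ∀ s, h s = (if s = s₀ then c₀ else 0)) :
    ∑ s, h s = c₀ := by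
  rw [Finset.sum_congr rfl (fun s _ => hh s)]
  simp

set_option maxHeartbeats 2000000
set_option linter.all false

/-- on a path with disjoint pairs, if `gap f ≥ 1` then some single swap
transforms `f` into `f'` with `value f' = value f - 1` and `gap f' ≤ gap f`. -/
theorem stmt7 {n : ℕ} {T S : Type*} [DecidableEq T] [Fintype S]
    (φ₁ φ₂ : S → T) (hdisj : DisjPairs φ₁ φ₂) (f : Fin n ≃ T)
    (hgap : 1 ≤ gapZ φ₁ φ₂ f) :
    ∃ f' : Fin n ≃ T, AdjSwap f f' ∧
      valueZ φ₁ φ₂ f' = valueZ φ₁ φ₂ f - 1 ∧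
      gapZ φ₁ φ₂ f' ≤ gapZ φ₁ φ₂ f := by
  classical
  set P := pmin φ₁ φ₂ f with hPdef
  set Q := pmax φ₁ φ₂ f with hQdef
  -- basic injectivity
  have hinj : ∀ t t' : T, (f.symm t : ℕ) = (f.symm t' : ℕ) → t = t' := by
    intro t t' h
    exact f.symm.injective (Fin.val_injective h)
  have hPQ : ∀ s, P s < Q s := by
    intro s
    have h1 : (f.symm (φ₁ s) : ℕ) ≠ (f.symm (φ₂ s) : ℕ) :=
      fun hc => hdisj.1 s (hinj _ _ hc)
    simp only [hPdef, hQdef, pmin, pmax]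
    omega
  have hQn : ∀ s, Q s < n := by
    intro s
    simp only [hQdef, pmax]
    exact max_lt (f.symm (φ₁ s)).isLt (f.symm (φ₂ s)).isLt
  have hdist : ∀ s s', s ≠ s' →
      P s ≠ P s' ∧ P s ≠ Q s' ∧ Q s ≠ P s' ∧ Q s ≠ Q s' := by
    intro s s' hne
    obtain ⟨h1, h2, h3, h4⟩ := hdisj.2 s s' hne
    have e1 : (f.symm (φ₁ s) : ℕ) ≠ (f.symm (φ₁ s') : ℕ) := fun hc => h1 (hinj _ _ hc)
    have e2 : (f.symm (φ₁ s) : ℕ) ≠ (f.symm (φ₂ s') : ℕ) := fun hc => h2 (hinj _ _ hc)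
    have e3 : (f.symm (φ₂ s) : ℕ) ≠ (f.symm (φ₁ s') : ℕ) := fun hc => h3 (hinj _ _ hc)
    have e4 : (f.symm (φ₂ s) : ℕ) ≠ (f.symm (φ₂ s') : ℕ) := fun hc => h4 (hinj _ _ hc)
    simp only [hPdef, hQdef, pmin, pmax]
    omega
  -- choose s₀ with maximal pmin among pairs at distance ≥ 2
  have hex : ∃ s, P s + 2 ≤ Q s := by
    by_contra hcon
    push_neg at hcon
    have : gapZ φ₁ φ₂ f ≤ 0 := by
      apply Finset.sum_nonpos
      intro s _
      have h1 := hPQ s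
      have h2 := hcon s
      rw [hPdef, hQdef] at h1 h2
      push_cast
      omega
    omega
  obtain ⟨s₀, hs₀t, hmax⟩ := Finset.exists_max_image
    (Finset.univ.filter fun s => P s + 2 ≤ Q s) P
    (by obtain ⟨s, hs⟩ := hex; exact ⟨s, Finset.mem_filter.mpr ⟨Finset.mem_univ _, hs⟩⟩)
  have hQ0 : P s₀ + 2 ≤ Q s₀ := (Finset.mem_filter.mp hs₀t).2
  have hmax' : ∀ s, P s + 2 ≤ Q s → P s ≤ P s₀ := by
    intro s hs
    exact hmax s (Finset.mem_filter.mpr ⟨Finset.mem_univ _, hs⟩)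
  set i := P s₀ with hidef
  have hin1 : i < n := lt_trans (by omega) (hQn s₀)
  have hin2 : i + 1 < n := lt_of_lt_of_le (by omega) (le_of_lt (hQn s₀))
  set I : Fin n := ⟨i, hin1⟩ with hIdef
  set J : Fin n := ⟨i+1, hin2⟩ with hJdef
  set f' := (Equiv.swap I J).trans f with hf'def
  have hsymm : ∀ t : T, ((f'.symm t : ℕ)) = sw i ((f.symm t : ℕ)) := by
    intro t
    have h0 : f'.symm t = (Equiv.swap I J) (f.symm t) := by
      simp [hf'def, Equiv.symm_trans_apply]
    rw [h0, Equiv.swap_apply_def, sw]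
    simp only [Fin.ext_iff, hIdef, hJdef]
    split_ifs <;> simp_all
  set P' := pmin φ₁ φ₂ f' with hP'def
  set Q' := pmax φ₁ φ₂ f' with hQ'def
  have hform : ∀ s, P' s = min (sw i (P s)) (sw i (Q s)) ∧
      Q' s = max (sw i (P s)) (sw i (Q s)) := by
    intro s
    constructor
    · simp only [hP'def, pmin, hsymm]
      rw [sw_min (sw i)]
      rfl
    · simp only [hQ'def, pmax, hsymm]
      rw [sw_max (sw i)]
      rfl
  have hadj : AdjSwap f f' := ⟨I, J, rfl, rfl⟩
  -- facts about s₀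
  have hi : i = P s₀ := hidef
  have hi0 : ∀ s, s ≠ s₀ → P s ≠ i ∧ Q s ≠ i := by
    intro s hs
    have := hdist s s₀ hs
    omega
  have hkey : gapZ φ₁ φ₂ f' ≤ gapZ φ₁ φ₂ f ∧
      valueZ φ₁ φ₂ f' = valueZ φ₁ φ₂ f - 1 := by
    by_cases hcase : ∃ s, P s = i + 1 ∨ Q s = i + 1
    · obtain ⟨s₁, hs₁⟩ := hcase
      have hs₁0 : s₁ ≠ s₀ := by
        intro h
        subst h
        omega
      have hs₀1 : s₀ ≠ s₁ := Ne.symm hs₁0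
      rcases hs₁ with hP1 | hQ1
      · -- CASE 2 : pmin s₁ = i+1, so pmax s₁ = i+2 by maximality
        have hQ1 : Q s₁ = i + 2 := by
          have h := hPQ s₁
          by_contra hne
          have h2 : P s₁ + 2 ≤ Q s₁ := by omega
          have := hmax' s₁ h2
          omega
        have hQ03 : i + 3 ≤ Q s₀ := by
          have := (hdist s₀ s₁ hs₀1).2.2.2
          omega
        have trip : ∀ s, (s = s₀ ∧ P s = i ∧ i+3 ≤ Q s ∧ P' s = i+1 ∧ Q' s = Q s)
            ∨ (s = s₁ ∧ P s = i+1 ∧ Q s = i+2 ∧ P' s = i ∧ Q' s = i+2)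
            ∨ (s ≠ s₀ ∧ s ≠ s₁ ∧ P' s = P s ∧ Q' s = Q s ∧
               P s ≠ i ∧ P s ≠ i+1 ∧ Q s ≠ i ∧ Q s ≠ i+1) := by
          intro s
          obtain ⟨h1, h2⟩ := hform s
          have hpq := hPQ s
          by_cases hs : s = s₀
          · subst hs
            left
            rw [hi.symm, sw_i, sw_self i _ (by omega) (by omega)] at h1 h2
            exact ⟨rfl, hi.symm, hQ03, by omega, by omega⟩
          by_cases hs' : s = s₁
          · subst hs'
            right; left
            rw [hP1, hQ1, sw_i1, sw_self i _ (by omega) (by omega)] at h1 h2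
            exact ⟨rfl, hP1, hQ1, by omega, by omega⟩
          · right; right
            have d0 := hdist s s₀ hs
            have d1 := hdist s s₁ hs'
            rw [sw_self i (P s) (by omega) (by omega),
              sw_self i (Q s) (by omega) (by omega)] at h1 h2
            exact ⟨hs, hs', by omega, by omega, by omega, by omega, by omega, by omega⟩
        have trip' : ∀ s, (P s = i ∧ i+3 ≤ Q s ∧ P' s = i+1 ∧ Q' s = Q s)
            ∨ (P s = i+1 ∧ Q s = i+2 ∧ P' s = i ∧ Q' s = i+2)
            ∨ (P' s = P s ∧ Q' s = Q s ∧
               P s ≠ i ∧ P s ≠ i+1 ∧ Q s ≠ i ∧ Q s ≠ i+1) := by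
          intro s
          rcases trip s with ⟨_, h⟩ | ⟨_, h⟩ | ⟨_, _, h⟩
          exacts [Or.inl h, Or.inr (Or.inl h), Or.inr (Or.inr h)]
        have hchar1 : ∀ s, P s = i + 1 ↔ s = s₁ := by
          intro s
          constructor
          · intro h
            by_contra hne
            exact (hdist s s₁ hne).1 (h.trans hP1.symm)
          · rintro rfl; exact hP1
        have hchar0 : ∀ s, P s = i ↔ s = s₀ := by
          intro s
          constructor
          · intro h
            by_contra hne
            exact (hdist s s₀ hne).1 (h.trans hi)
          · rintro rfl; exact hi.symm
        have hgapeq : gapZ φ₁ φ₂ f' = gapZ φ₁ φ₂ f := by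
          have hd : gapZ φ₁ φ₂ f' - gapZ φ₁ φ₂ f = 0 := by
            unfold gapZ
            rw [← Finset.sum_sub_distrib]
            refine (sum_delta2 _ s₀ s₁ (-1) 1 ?_).trans (by ring)
            intro s
            simp only [← hPdef, ← hQdef, ← hP'def, ← hQ'def]
            rcases trip s with ⟨h0, h⟩ | ⟨h0, h⟩ | ⟨h0, h0', h⟩
            · rw [if_pos h0, if_neg (h0 ▸ hs₀1)]
              omega
            · rw [if_neg (h0 ▸ hs₁0), if_pos h0]
              omega
            · rw [if_neg h0, if_neg h0']
              omega
          omega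
        have hiff : ∀ u v : S,
            (P' u < P' v ∧ P' v < Q' u ∧ Q' u < Q' v) ↔
              ((P u = i+1 ∧ P v = i) ∨ (P u < P v ∧ P v < Q u ∧ Q u < Q v)) := by
          intro u v
          have hu := trip' u
          have hv := trip' v
          omega
        have hset : ((Finset.univ ×ˢ Finset.univ : Finset (S × S)).filter fun p =>
              P' p.1 < P' p.2 ∧ P' p.2 < Q' p.1 ∧ Q' p.1 < Q' p.2) =
            insert (s₁, s₀) ((Finset.univ ×ˢ Finset.univ : Finset (S × S)).filter fun p =>
              P p.1 < P p.2 ∧ P p.2 < Q p.1 ∧ Q p.1 < Q p.2) := by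
          ext ⟨u, v⟩
          simp only [Finset.mem_insert, Finset.mem_filter, Finset.mem_product,
            Finset.mem_univ, true_and, and_true, Prod.mk.injEq]
          rw [hiff u v]
          exact or_congr (and_congr (hchar1 u) (hchar0 v)) Iff.rfl
        have hnotmem : (s₁, s₀) ∉ ((Finset.univ ×ˢ Finset.univ : Finset (S × S)).filter fun p =>
              P p.1 < P p.2 ∧ P p.2 < Q p.1 ∧ Q p.1 < Q p.2) := by
          simp only [Finset.mem_filter, Finset.mem_product, Finset.mem_univ, true_and, and_true]
          omega
        have hcrosseq : crossZ φ₁ φ₂ f' = crossZ φ₁ φ₂ f + 1 := by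
          unfold crossZ
          simp only [← hPdef, ← hQdef, ← hP'def, ← hQ'def]
          rw [hset, Finset.card_insert_of_notMem hnotmem]
          push_cast
          ring
        constructor
        · omega
        · unfold valueZ
          rw [hgapeq, hcrosseq]
          ring
      · -- CASE 3 : pmax s₁ = i+1
        have hPs₁ : P s₁ < i := by
          have h := hPQ s₁
          have := (hdist s₁ s₀ hs₁0).1
          omega
        have hq0 : Q s₀ ≠ i + 1 := by
          have := (hdist s₀ s₁ hs₀1).2.2.2
          omega
        have trip : ∀ s, (s = s₀ ∧ P s = i ∧ i+2 ≤ Q s ∧ P' s = i+1 ∧ Q' s = Q s)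
            ∨ (s = s₁ ∧ P s < i ∧ Q s = i+1 ∧ P' s = P s ∧ Q' s = i)
            ∨ (s ≠ s₀ ∧ s ≠ s₁ ∧ P' s = P s ∧ Q' s = Q s ∧
               P s ≠ i ∧ P s ≠ i+1 ∧ Q s ≠ i ∧ Q s ≠ i+1) := by
          intro s
          obtain ⟨h1, h2⟩ := hform s
          have hpq := hPQ s
          by_cases hs : s = s₀
          · subst hs
            left
            rw [hi.symm, sw_i, sw_self i _ (by omega) (by omega)] at h1 h2
            exact ⟨rfl, hi.symm, hQ0, by omega, by omega⟩
          by_cases hs' : s = s₁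
          · subst hs'
            right; left
            rw [hQ1, sw_i1, sw_self i _ (by omega) (by omega)] at h1 h2
            exact ⟨rfl, hPs₁, hQ1, by omega, by omega⟩
          · right; right
            have d0 := hdist s s₀ hs
            have d1 := hdist s s₁ hs'
            rw [sw_self i (P s) (by omega) (by omega),
              sw_self i (Q s) (by omega) (by omega)] at h1 h2
            exact ⟨hs, hs', by omega, by omega, by omega, by omega, by omega, by omega⟩
        have trip' : ∀ s, (P s = i ∧ i+2 ≤ Q s ∧ P' s = i+1 ∧ Q' s = Q s)
            ∨ (P s < i ∧ Q s = i+1 ∧ P' s = P s ∧ Q' s = i)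
            ∨ (P' s = P s ∧ Q' s = Q s ∧
               P s ≠ i ∧ P s ≠ i+1 ∧ Q s ≠ i ∧ Q s ≠ i+1) := by
          intro s
          rcases trip s with ⟨_, h⟩ | ⟨_, h⟩ | ⟨_, _, h⟩
          exacts [Or.inl h, Or.inr (Or.inl h), Or.inr (Or.inr h)]
        have hchar1 : ∀ s, Q s = i + 1 ↔ s = s₁ := by
          intro s
          constructor
          · intro h
            by_contra hne
            exact (hdist s s₁ hne).2.2.2 (h.trans hQ1.symm)
          · rintro rfl; exact hQ1
        have hchar0 : ∀ s, P s = i ↔ s = s₀ := by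
          intro s
          constructor
          · intro h
            by_contra hne
            exact (hdist s s₀ hne).1 (h.trans hi)
          · rintro rfl; exact hi.symm
        have hgapeq : gapZ φ₁ φ₂ f' = gapZ φ₁ φ₂ f - 2 := by
          have hd : gapZ φ₁ φ₂ f' - gapZ φ₁ φ₂ f = -2 := by
            unfold gapZ
            rw [← Finset.sum_sub_distrib]
            refine (sum_delta2 _ s₀ s₁ (-1) (-1) ?_).trans (by ring)
            intro s
            simp only [← hPdef, ← hQdef, ← hP'def, ← hQ'def]
            rcases trip s with ⟨h0, h⟩ | ⟨h0, h⟩ | ⟨h0, h0', h⟩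
            · rw [if_pos h0, if_neg (h0 ▸ hs₀1)]
              omega
            · rw [if_neg (h0 ▸ hs₁0), if_pos h0]
              omega
            · rw [if_neg h0, if_neg h0']
              omega
          omega
        have hiff : ∀ u v : S,
            (P' u < P' v ∧ P' v < Q' u ∧ Q' u < Q' v) ↔
              (¬(Q u = i+1 ∧ P v = i) ∧ (P u < P v ∧ P v < Q u ∧ Q u < Q v)) := by
          intro u v
          have hu := trip' u
          have hv := trip' v
          omega
        have hset : ((Finset.univ ×ˢ Finset.univ : Finset (S × S)).filter fun p =>
              P' p.1 < P' p.2 ∧ P' p.2 < Q' p.1 ∧ Q' p.1 < Q' p.2) =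
            Finset.erase ((Finset.univ ×ˢ Finset.univ : Finset (S × S)).filter fun p =>
              P p.1 < P p.2 ∧ P p.2 < Q p.1 ∧ Q p.1 < Q p.2) (s₁, s₀) := by
          ext ⟨u, v⟩
          simp only [Finset.mem_erase, Finset.mem_filter, Finset.mem_product,
            Finset.mem_univ, true_and, and_true, ne_eq, Prod.mk.injEq]
          rw [hiff u v]
          exact and_congr (not_congr (and_congr (hchar1 u) (hchar0 v))) Iff.rfl
        have hmem : (s₁, s₀) ∈ ((Finset.univ ×ˢ Finset.univ : Finset (S × S)).filter fun p =>
              P p.1 < P p.2 ∧ P p.2 < Q p.1 ∧ Q p.1 < Q p.2) := by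
          simp only [Finset.mem_filter, Finset.mem_product, Finset.mem_univ, true_and, and_true]
          omega
        have hcard : 1 ≤ ((Finset.univ ×ˢ Finset.univ : Finset (S × S)).filter fun p =>
              P p.1 < P p.2 ∧ P p.2 < Q p.1 ∧ Q p.1 < Q p.2).card :=
          Finset.card_pos.mpr ⟨_, hmem⟩
        have hcrosseq : crossZ φ₁ φ₂ f' = crossZ φ₁ φ₂ f - 1 := by
          unfold crossZ
          simp only [← hPdef, ← hQdef, ← hP'def, ← hQ'def]
          rw [hset, Finset.card_erase_of_mem hmem]
          omega
        constructor
        · omega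
        · unfold valueZ
          rw [hgapeq, hcrosseq]
          ring
    · -- CASE 1 : no pair has an endpoint at i+1
      push_neg at hcase
      have trip : ∀ s, (s = s₀ ∧ P s = i ∧ i+2 ≤ Q s ∧ P' s = i+1 ∧ Q' s = Q s)
          ∨ (s ≠ s₀ ∧ P' s = P s ∧ Q' s = Q s ∧
             P s ≠ i ∧ P s ≠ i+1 ∧ Q s ≠ i ∧ Q s ≠ i+1) := by
        intro s
        obtain ⟨h1, h2⟩ := hform s
        have hpq := hPQ s
        have hc := hcase s
        by_cases hs : s = s₀
        · subst hs
          left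
          rw [hi.symm, sw_i, sw_self i _ (by omega) (by omega)] at h1 h2
          exact ⟨rfl, hi.symm, hQ0, by omega, by omega⟩
        · right
          have d0 := hdist s s₀ hs
          rw [sw_self i (P s) (by omega) (by omega),
            sw_self i (Q s) (by omega) (by omega)] at h1 h2
          exact ⟨hs, by omega, by omega, by omega, hc.1, by omega, hc.2⟩
      have trip' : ∀ s, (P s = i ∧ i+2 ≤ Q s ∧ P' s = i+1 ∧ Q' s = Q s)
          ∨ (P' s = P s ∧ Q' s = Q s ∧
             P s ≠ i ∧ P s ≠ i+1 ∧ Q s ≠ i ∧ Q s ≠ i+1) := by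
        intro s
        rcases trip s with ⟨_, h⟩ | ⟨_, h⟩
        exacts [Or.inl h, Or.inr h]
      have hgapeq : gapZ φ₁ φ₂ f' = gapZ φ₁ φ₂ f - 1 := by
        have hd : gapZ φ₁ φ₂ f' - gapZ φ₁ φ₂ f = -1 := by
          unfold gapZ
          rw [← Finset.sum_sub_distrib]
          refine (sum_delta1 _ s₀ (-1) ?_).trans rfl
          intro s
          simp only [← hPdef, ← hQdef, ← hP'def, ← hQ'def]
          rcases trip s with ⟨h0, h⟩ | ⟨h0, h⟩
          · rw [if_pos h0]
            omega
          · rw [if_neg h0]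
            omega
        omega
      have hset : ((Finset.univ ×ˢ Finset.univ : Finset (S × S)).filter fun p =>
            P' p.1 < P' p.2 ∧ P' p.2 < Q' p.1 ∧ Q' p.1 < Q' p.2) =
          ((Finset.univ ×ˢ Finset.univ : Finset (S × S)).filter fun p =>
            P p.1 < P p.2 ∧ P p.2 < Q p.1 ∧ Q p.1 < Q p.2) := by
        ext ⟨u, v⟩
        simp only [Finset.mem_filter, Finset.mem_product, Finset.mem_univ, true_and, and_true]
        have hu := trip' u
        have hv := trip' v
        omega
      have hcrosseq : crossZ φ₁ φ₂ f' = crossZ φ₁ φ₂ f := by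
        unfold crossZ
        simp only [← hPdef, ← hQdef, ← hP'def, ← hQ'def]
        rw [hset]
      constructor
      · omega
      · unfold valueZ
        rw [hgapeq, hcrosseq]
        ring
  exact ⟨f', hadj, hkey.2, hkey.1⟩
end
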